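/- arXiv:math/0411056 — 3 statements merged into one kernel-verified Lean document; each statement's English description precedes it below -/
import Mathlib

section
/- In ℝ[S_4], let ι : ℝ[S_3] → ℝ[S_4] be the algebra embedding induced by the group embedding S_3 → S_4 that fixes 4. Then the element ρ := y_t*·ι(η) is nonzero, and for ν ∈ ℝ the element σ_ν := y_t*·ι(ξ_ν) is nonzero if and only if ν ≠ 1/2. -/
/-- The star map `a* := Σ_p a(p)·p⁻¹` on the group ring `ℝ[S_r]`. -/
noncomputable def astar {r : ℕ} (a : MonoidAlgebra ℝ (Equiv.Perm (Fin r))) :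
    MonoidAlgebra ℝ (Equiv.Perm (Fin r)) :=
  MonoidAlgebra.ofCoeff (Finsupp.equivFunOnFinite.symm (fun p => a.coeff p⁻¹))
/-- The Young symmetrizer `y_t = Σ_{p∈H_t} Σ_{q∈V_t} sign(q)·(p∘q)` of the tableau with
rows `{1,3}`, `{2,4}` (indices `0`-based in `Fin 4`):
`H_t = {id, (1 3), (2 4), (1 3)(2 4)}`, `V_t = {id, (1 2), (3 4), (1 2)(3 4)}`. -/
noncomputable def yt : MonoidAlgebra ℝ (Equiv.Perm (Fin 4)) :=
  (MonoidAlgebra.single 1 1 + MonoidAlgebra.single (Equiv.swap 0 2) 1 +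
     MonoidAlgebra.single (Equiv.swap 1 3) 1 +
     MonoidAlgebra.single (Equiv.swap 0 2 * Equiv.swap 1 3) 1) *
  (MonoidAlgebra.single 1 1 - MonoidAlgebra.single (Equiv.swap 0 1) 1 -
     MonoidAlgebra.single (Equiv.swap 2 3) 1 +
     MonoidAlgebra.single (Equiv.swap 0 1 * Equiv.swap 2 3) 1)
/-- `ξ_ν := (1/3)(id + ν·(2 3) + (1−ν)·(1 2) − ν·(1 2 3) + (ν−1)·(1 3 2) − (1 3)) ∈ ℝ[S_3]`,
with `0`-based indices in `Fin 3`; `finRotate 3` is the cycle `(1 2 3)`. -/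
noncomputable def xi (ν : ℝ) : MonoidAlgebra ℝ (Equiv.Perm (Fin 3)) :=
  (1/3 : ℝ) • (MonoidAlgebra.single 1 1 + MonoidAlgebra.single (Equiv.swap 1 2) ν +
    MonoidAlgebra.single (Equiv.swap 0 1) (1 - ν) - MonoidAlgebra.single (finRotate 3) ν +
    MonoidAlgebra.single (finRotate 3)⁻¹ (ν - 1) - MonoidAlgebra.single (Equiv.swap 0 2) 1)
/-- `η := (1/3)(id − (1 2) − (1 2 3) + (1 3)) ∈ ℝ[S_3]`, with `0`-based indices in `Fin 3`. -/
noncomputable def eta : MonoidAlgebra ℝ (Equiv.Perm (Fin 3)) :=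
  (1/3 : ℝ) • (MonoidAlgebra.single 1 1 - MonoidAlgebra.single (Equiv.swap 0 1) 1 -
    MonoidAlgebra.single (finRotate 3) 1 + MonoidAlgebra.single (Equiv.swap 0 2) 1)

/-- The algebra embedding `ι : ℝ[S_3] → ℝ[S_4]` induced by the group embedding
`S_3 → S_4` fixing the last point (given by the embedding `Fin 3 ↪ Fin 4`). -/
noncomputable def iota :
    MonoidAlgebra ℝ (Equiv.Perm (Fin 3)) →+* MonoidAlgebra ℝ (Equiv.Perm (Fin 4)) :=
  MonoidAlgebra.mapDomainRingHom ℝ (Equiv.Perm.viaEmbeddingHom (Fin.castSuccEmb))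


/-!
The row group of `t` is generated by the commuting transpositions `(1 3)` and `(2 4)`, so
`y_t* = b_t (1 + (2 4)) ι(1 + (1 3))`, where `b_t` is the column antisymmetrizer, which is
fixed by the star map. In `ℝ[S_3]` one computes `(1 + (1 3)) η = 2 η` and
`(1 + (1 3)) ξ_ν = (2ν - 1)(ξ_1 - ξ_0)`. It remains to see that `b_t (1 + (2 4)) ι(x) ≠ 0`
for `x = η` and `x = ξ_1 - ξ_0`: of the eight permutations in the support of `b_t (1 + (2 4))`,
only `id` and `(1 2)` fix `4`, so the coefficient of `id` is `x(id) - x((1 2))`.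
-/

open MonoidAlgebra Equiv

section Star

variable {r : ℕ}

lemma astar_zero : astar (0 : MonoidAlgebra ℝ (Perm (Fin r))) = 0 := by
  ext p; simp [astar]

lemma astar_add (a b : MonoidAlgebra ℝ (Perm (Fin r))) : astar (a + b) = astar a + astar b := by
  ext p; simp [astar]

lemma astar_sub (a b : MonoidAlgebra ℝ (Perm (Fin r))) : astar (a - b) = astar a - astar b := by
  ext p; simp [astar]

lemma astar_single (g : Perm (Fin r)) (c : ℝ) : astar (single g c) = single g⁻¹ c := by
  ext p
  simp [astar, Finsupp.single_apply, inv_eq_iff_eq_inv]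

lemma astar_mul (a b : MonoidAlgebra ℝ (Perm (Fin r))) : astar (a * b) = astar b * astar a := by
  induction a using induction_linear with
  | zero => simp [astar_zero]
  | add a a' ha ha' => simp [add_mul, mul_add, astar_add, ha, ha']
  | single g c =>
    induction b using induction_linear with
    | zero => simp [astar_zero]
    | add b b' hb hb' => simp [add_mul, mul_add, astar_add, hb, hb']
    | single h d => simp [single_mul_single, astar_single, mul_comm]

end Star

theorem Equiv.Perm.viaEmbedding_swap {α β : Type*} [DecidableEq α] [DecidableEq β] (ι : α ↪ β)
    (a b : α) : (swap a b).viaEmbedding ι = swap (ι a) (ι b) := by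
  ext x
  by_cases hx : x ∈ Set.range ι
  · obtain ⟨y, rfl⟩ := hx
    rw [Perm.viaEmbedding_apply, ι.injective.swap_apply]
  · rw [Perm.viaEmbedding_apply_of_notMem _ _ _ hx, swap_apply_of_ne_of_ne] <;>
      rintro rfl <;> exact hx ⟨_, rfl⟩

lemma iota_single (g : Perm (Fin 3)) (c : ℝ) :
    iota (single g c) = single (Perm.viaEmbeddingHom Fin.castSuccEmb g) c :=
  mapDomain_single

lemma iota_smul (c : ℝ) (x : MonoidAlgebra ℝ (Perm (Fin 3))) : iota (c • x) = c • iota x :=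
  mapDomain_smul _ c x

lemma coeff_iota_viaEmbeddingHom (x : MonoidAlgebra ℝ (Perm (Fin 3))) (s : Perm (Fin 3)) :
    (iota x).coeff (Perm.viaEmbeddingHom Fin.castSuccEmb s) = x.coeff s :=
  Finsupp.mapDomain_apply (Perm.viaEmbeddingHom_injective _) _ _

lemma coeff_iota_of_apply_last_ne (x : MonoidAlgebra ℝ (Perm (Fin 3))) {g : Perm (Fin 4)}
    (hg : g (Fin.last 3) ≠ Fin.last 3) : (iota x).coeff g = 0 := by
  refine Finsupp.mapDomain_of_notMem_range _ _ ?_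
  rintro ⟨s, rfl⟩
  refine hg (Perm.viaEmbedding_apply_of_notMem _ _ _ ?_)
  rintro ⟨i, hi⟩
  exact (Fin.castSucc_lt_last i).ne hi

noncomputable def swapSymmetrizer {n : ℕ} (i j : Fin n) : MonoidAlgebra ℝ (Perm (Fin n)) :=
  1 + single (swap i j) 1

noncomputable def colAntisymmetrizer : MonoidAlgebra ℝ (Perm (Fin 4)) :=
  single 1 1 - single (swap 0 1) 1 - single (swap 2 3) 1 + single (swap 0 1 * swap 2 3) 1

lemma astar_swapSymmetrizer {n : ℕ} (i j : Fin n) :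
    astar (swapSymmetrizer i j) = swapSymmetrizer i j := by
  rw [swapSymmetrizer, MonoidAlgebra.one_def, astar_add, astar_single, astar_single, inv_one,
    swap_inv]

lemma iota_swapSymmetrizer (i j : Fin 3) :
    iota (swapSymmetrizer i j) = swapSymmetrizer i.castSucc j.castSucc := by
  rw [swapSymmetrizer, swapSymmetrizer, map_add, map_one, iota_single,
    Perm.viaEmbeddingHom_apply, Perm.viaEmbedding_swap]
  rfl

lemma astar_colAntisymmetrizer : astar colAntisymmetrizer = colAntisymmetrizer := by
  have h : (swap (0 : Fin 4) 1 * swap 2 3)⁻¹ = swap 0 1 * swap 2 3 := by decide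
  simp only [colAntisymmetrizer, astar_add, astar_sub, astar_single, inv_one, swap_inv, h]

lemma yt_eq_swapSymmetrizer_mul :
    yt = swapSymmetrizer 0 2 * swapSymmetrizer 1 3 * colAntisymmetrizer := by
  rw [yt, colAntisymmetrizer]
  congr 1
  simp only [swapSymmetrizer, add_mul, mul_add, single_mul_single, mul_one, one_mul,
    MonoidAlgebra.one_def]
  abel

lemma astar_yt_mul_iota (x : MonoidAlgebra ℝ (Perm (Fin 3))) :
    astar yt * iota x =
      colAntisymmetrizer * swapSymmetrizer 1 3 * iota (swapSymmetrizer 0 2 * x) := by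
  rw [yt_eq_swapSymmetrizer_mul, astar_mul, astar_mul, astar_colAntisymmetrizer,
    astar_swapSymmetrizer, astar_swapSymmetrizer, map_mul, iota_swapSymmetrizer]
  simp only [mul_assoc]
  rfl

lemma coeff_one_colAntisymmetrizer_mul_swapSymmetrizer_mul_iota
    (x : MonoidAlgebra ℝ (Perm (Fin 3))) :
    (colAntisymmetrizer * swapSymmetrizer 1 3 * iota x).coeff 1 =
      x.coeff 1 - x.coeff (swap 0 1) := by
  have h1 : (iota x).coeff 1 = x.coeff 1 := by
    simpa using coeff_iota_viaEmbeddingHom x 1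
  have h01 : (iota x).coeff (swap 0 1) = x.coeff (swap 0 1) := by
    simpa [Perm.viaEmbeddingHom_apply, Perm.viaEmbedding_swap] using
      coeff_iota_viaEmbeddingHom x (swap 0 1)
  simp (disch := decide) only [colAntisymmetrizer, swapSymmetrizer, MonoidAlgebra.one_def,
    mul_add, add_mul, sub_mul, single_mul_single, coeff_add, coeff_sub, Finsupp.add_apply,
    Finsupp.sub_apply, coeff_single_mul_apply, coeff_iota_of_apply_last_ne, mul_one, inv_one,
    swap_inv, h1, h01]
  ring

lemma colAntisymmetrizer_mul_swapSymmetrizer_mul_iota_ne_zero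
    {x : MonoidAlgebra ℝ (Perm (Fin 3))} (hx : x.coeff 1 ≠ x.coeff (swap 0 1)) :
    colAntisymmetrizer * swapSymmetrizer 1 3 * iota x ≠ 0 := by
  intro h
  apply hx
  rw [← sub_eq_zero, ← coeff_one_colAntisymmetrizer_mul_swapSymmetrizer_mul_iota, h]
  rfl

lemma swapSymmetrizer_mul_eta : swapSymmetrizer 0 2 * eta = (2 : ℝ) • eta := by
  have h1 : swap (0 : Fin 3) 2 * swap 0 1 = finRotate 3 := by decide
  have h2 : swap (0 : Fin 3) 2 * finRotate 3 = swap 0 1 := by decide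
  simp only [eta, swapSymmetrizer, add_mul, one_mul, mul_smul_comm, mul_add, mul_sub,
    single_mul_single, h1, h2, swap_mul_self, mul_one, MonoidAlgebra.one_def]
  simp only [← smul_of]
  module

lemma swapSymmetrizer_mul_xi (ν : ℝ) :
    swapSymmetrizer 0 2 * xi ν = (2 * ν - 1) • (xi 1 - xi 0) := by
  have h1 : swap (0 : Fin 3) 2 * swap 1 2 = (finRotate 3)⁻¹ := by decide
  have h2 : swap (0 : Fin 3) 2 * swap 0 1 = finRotate 3 := by decide
  have h3 : swap (0 : Fin 3) 2 * finRotate 3 = swap 0 1 := by decide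
  have h4 : swap (0 : Fin 3) 2 * (finRotate 3)⁻¹ = swap 1 2 := by decide
  simp only [xi, swapSymmetrizer, add_mul, one_mul, mul_smul_comm, mul_add, mul_sub,
    single_mul_single, h1, h2, h3, h4, swap_mul_self, mul_one, MonoidAlgebra.one_def]
  simp only [← smul_of]
  module

lemma eta_coeff_one_ne_coeff_swap : eta.coeff 1 ≠ eta.coeff (swap 0 1) := by
  norm_num +decide [eta]

lemma xi_sub_coeff_one_ne_coeff_swap :
    (xi 1 - xi 0).coeff 1 ≠ (xi 1 - xi 0).coeff (swap 0 1) := by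
  simp +decide [xi]

/-- `ρ := y_t*·ι(η)` is nonzero, and `σ_ν := y_t*·ι(ξ_ν)` is nonzero iff
`ν ≠ 1/2`. -/
theorem stmt_10 :
    astar yt * iota eta ≠ 0 ∧
    ∀ ν : ℝ, astar yt * iota (xi ν) ≠ 0 ↔ ν ≠ 1/2 := by
  refine ⟨?_, fun ν => ?_⟩
  · rw [astar_yt_mul_iota, swapSymmetrizer_mul_eta, iota_smul, mul_smul_comm]
    exact smul_ne_zero two_ne_zero
      (colAntisymmetrizer_mul_swapSymmetrizer_mul_iota_ne_zero eta_coeff_one_ne_coeff_swap)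
  · rw [astar_yt_mul_iota, swapSymmetrizer_mul_xi, iota_smul, mul_smul_comm, smul_ne_zero_iff]
    have hne := colAntisymmetrizer_mul_swapSymmetrizer_mul_iota_ne_zero
      xi_sub_coeff_one_ne_coeff_swap
    rw [and_iff_left hne, ne_eq, ne_eq, sub_eq_zero, not_iff_not]
    constructor <;> intro h <;> linarith
end

section
/- Let V be a finite-dimensional real vector space and let e ∈ ℝ[S_3] be either η or ξ_ν for some ν ∈ ℝ with ν ≠ 1/2. Then the space A(V) of algebraic curvature tensors on V equals the linear span of the set {y_t*(U⊗w) : U a trilinear map V^3 → ℝ with eU = U, w a linear functional on V}. -/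
/-- Action of a group ring element `a ∈ ℝ[S_r]` on an `r`-multilinear map:
`(aT)(v₁,…,v_r) = Σ_p a(p)·T(v_{p(1)},…,v_{p(r)})`. -/
noncomputable def gact {V : Type} [AddCommGroup V] [Module ℝ V] {r : ℕ}
    (a : MonoidAlgebra ℝ (Equiv.Perm (Fin r)))
    (T : MultilinearMap ℝ (fun _ : Fin r => V) ℝ) :
    MultilinearMap ℝ (fun _ : Fin r => V) ℝ :=
  ∑ p : Equiv.Perm (Fin r), a.coeff p • T.domDomCongr p
/-- Pointwise action of a group ring element `a ∈ ℝ[S_r]` on a function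
`T : V^r → ℝ`: `(aT)(v₁,…,v_r) = Σ_p a(p)·T(v_{p(1)},…,v_{p(r)})`. -/
noncomputable def fact {V : Type} [AddCommGroup V] [Module ℝ V] {r : ℕ}
    (a : MonoidAlgebra ℝ (Equiv.Perm (Fin r)))
    (T : (Fin r → V) → ℝ) : (Fin r → V) → ℝ :=
  fun v => ∑ p : Equiv.Perm (Fin r), a.coeff p * T (fun i => v (p i))
/-!
Every `y_t* F` is an algebraic curvature tensor: this is a formal identity between the sixteen
terms of `y_t*`. Conversely, let `e` act on the first three slots of `R ∈ A(V)`. Modulo the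
curvature identities the result is `α(e) R + β(e) R'` with `R'(a,b,c,d) = R(a,c,b,d)`, and
`y_t*` multiplies `R` by `12` and kills `R'`. Expanding the last slot in a basis `b_j` with dual
basis `b^j` writes the first term as `Σ_j (e R(·,·,·,b_j)) ⊗ b^j`, so
`R = (12 α(e))⁻¹ Σ_j y_t*((e R(·,·,·,b_j)) ⊗ b^j)`, and each `e R(·,·,·,b_j)` is fixed by `e`
when `e` is idempotent. Finally `α(η) = 4/3` and `α(ξ_ν) = (2ν - 1)/3`.
-/

open Equiv

theorem sum_perm_fin_three {M : Type*} [AddCommMonoid M] (f : Perm (Fin 3) → M) :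
    ∑ p, f p = f 1 + f (swap 1 2) + f (swap 0 1) + f (finRotate 3) + f (finRotate 3)⁻¹ +
      f (swap 0 2) := by
  rw [show (Finset.univ : Finset (Perm (Fin 3))) =
    {1, swap 1 2, swap 0 1, finRotate 3, (finRotate 3)⁻¹, swap 0 2} by decide]
  simp +decide only [Finset.sum_insert, Finset.mem_insert, Finset.mem_singleton,
    Finset.sum_singleton, add_assoc]

theorem comp_perm_fin_three {α : Type*} (v : Fin 3 → α) (σ : Perm (Fin 3)) :
    (fun i => v (σ i)) = ![v (σ 0), v (σ 1), v (σ 2)] := by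
  ext i; fin_cases i <;> rfl

theorem comp_perm_fin_four {α : Type*} (v : Fin 4 → α) (σ : Perm (Fin 4)) :
    (fun i => v (σ i)) = ![v (σ 0), v (σ 1), v (σ 2), v (σ 3)] := by
  ext i; fin_cases i <;> rfl

theorem MonoidAlgebra.sum_coeff_single_mul {G : Type*} [Fintype G] (g : G) (c : ℝ) (f : G → ℝ) :
    ∑ p, (single g c).coeff p * f p = c * f g := by
  classical
  simp [coeff_single, Finsupp.single_apply]

theorem init_fin_four {α : Type*} (v : Fin 4 → α) : Fin.init v = ![v 0, v 1, v 2] := by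
  ext i; fin_cases i <;> rfl

theorem vec_fin_four_eta {α : Type*} (v : Fin 4 → α) : v = ![v 0, v 1, v 2, v 3] := by
  ext i; fin_cases i <;> rfl

section GroupRingAction

variable {V : Type} [AddCommGroup V] [Module ℝ V]

theorem gact_apply {r : ℕ} (a : MonoidAlgebra ℝ (Perm (Fin r)))
    (T : MultilinearMap ℝ (fun _ : Fin r => V) ℝ) (v : Fin r → V) :
    gact a T v = fact a T v := by
  simp [gact, fact]

theorem fact_finset_sum {r : ℕ} {ι : Type*} (a : MonoidAlgebra ℝ (Perm (Fin r))) (s : Finset ι)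
    (F : ι → (Fin r → V) → ℝ) (v : Fin r → V) :
    fact a (∑ j ∈ s, F j) v = ∑ j ∈ s, fact a (F j) v := by
  simp only [fact, Finset.sum_apply, Finset.mul_sum]
  exact Finset.sum_comm

theorem fact_astar {r : ℕ} (a : MonoidAlgebra ℝ (Perm (Fin r))) (F : (Fin r → V) → ℝ)
    (v : Fin r → V) :
    fact (astar a) F v = ∑ p : Perm (Fin r), a.coeff p * F (fun i => v (p⁻¹ i)) :=
  Fintype.sum_equiv (Equiv.inv _) _ _ fun p => by simp [astar]

theorem gact_apply_fin_three (e : MonoidAlgebra ℝ (Perm (Fin 3)))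
    (U : MultilinearMap ℝ (fun _ : Fin 3 => V) ℝ) (x : Fin 3 → V) :
    gact e U x = e.coeff 1 * U ![x 0, x 1, x 2] + e.coeff (swap 1 2) * U ![x 0, x 2, x 1] +
      e.coeff (swap 0 1) * U ![x 1, x 0, x 2] + e.coeff (finRotate 3) * U ![x 1, x 2, x 0] +
      e.coeff (finRotate 3)⁻¹ * U ![x 2, x 0, x 1] + e.coeff (swap 0 2) * U ![x 2, x 1, x 0] := by
  rw [gact_apply, fact, sum_perm_fin_three]
  simp only [comp_perm_fin_three]
  rfl

theorem fact_astar_yt_apply (F : (Fin 4 → V) → ℝ) (v : Fin 4 → V) :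
    fact (astar yt) F v =
      F ![v 0, v 1, v 2, v 3] - F ![v 1, v 0, v 2, v 3] - F ![v 0, v 1, v 3, v 2]
      + F ![v 1, v 0, v 3, v 2] + F ![v 2, v 1, v 0, v 3] - F ![v 2, v 0, v 1, v 3]
      - F ![v 3, v 1, v 0, v 2] + F ![v 3, v 0, v 1, v 2] + F ![v 0, v 3, v 2, v 1]
      - F ![v 1, v 3, v 2, v 0] - F ![v 0, v 2, v 3, v 1] + F ![v 1, v 2, v 3, v 0]
      + F ![v 2, v 3, v 0, v 1] - F ![v 2, v 3, v 1, v 0] - F ![v 3, v 2, v 0, v 1]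
      + F ![v 3, v 2, v 1, v 0] := by
  rw [fact_astar]
  simp only [yt, mul_add, mul_sub, add_mul, sub_mul, MonoidAlgebra.single_mul_single, one_mul,
    mul_one, MonoidAlgebra.coeff_add, MonoidAlgebra.coeff_sub, Finsupp.add_apply,
    Finsupp.sub_apply, Finset.sum_add_distrib, Finset.sum_sub_distrib,
    MonoidAlgebra.sum_coeff_single_mul, comp_perm_fin_four]
  simp +decide only [mul_inv_rev, swap_inv, Perm.mul_apply, inv_one,
    Perm.one_apply, swap_apply_def, ↓reduceIte]
  ring

end GroupRingAction

section CurvatureTensors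

variable {V : Type}

structure IsAlgCurvatureTensor (R : (Fin 4 → V) → ℝ) : Prop where
  antisymm : ∀ w x y z : V, R ![w, x, y, z] = - R ![w, x, z, y]
  pair_symm : ∀ w x y z : V, R ![w, x, y, z] = R ![y, z, w, x]
  bianchi : ∀ w x y z : V, R ![w, x, y, z] + R ![w, y, z, x] + R ![w, z, x, y] = 0

namespace IsAlgCurvatureTensor

variable {R : (Fin 4 → V) → ℝ}

theorem antisymm_left (hR : IsAlgCurvatureTensor R) (w x y z : V) :
    R ![w, x, y, z] = - R ![x, w, y, z] := by
  linear_combination hR.pair_symm w x y z + hR.antisymm y z w x + hR.pair_symm x w y z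

variable [AddCommGroup V] [Module ℝ V]

theorem fact_astar_yt_self (hR : IsAlgCurvatureTensor R) (v : Fin 4 → V) :
    fact (astar yt) R v = 12 * R v := by
  obtain ⟨a, b, c, d, rfl⟩ : ∃ a b c d, v = ![a, b, c, d] := ⟨_, _, _, _, vec_fin_four_eta v⟩
  rw [fact_astar_yt_apply]
  simp only [Matrix.cons_val]
  -- The first and last four terms each give `4 R(a,b,c,d)` by the symmetries; the middle eight
  -- pair up under the pair symmetry, and the Bianchi identities with first argument `a` and `b`
  -- turn them into another `4 R(a,b,c,d)`.
  linear_combination hR.antisymm c d b a - 2 * hR.pair_symm c d b a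
    - 7 * hR.antisymm_left b a c d + hR.pair_symm a c d b + hR.pair_symm a b d c
    - hR.pair_symm c a b d - 2 * hR.antisymm a b c d + 2 * hR.antisymm b a d c
    - 2 * hR.bianchi a b c d + 2 * hR.antisymm a d b c + hR.pair_symm d a b c
    + hR.pair_symm d c b a + hR.pair_symm c b a d + 2 * hR.bianchi b a c d
    - 2 * hR.antisymm b d a c

theorem fact_astar_yt_swap (hR : IsAlgCurvatureTensor R) (v : Fin 4 → V) :
    fact (astar yt) (fun v => R ![v 0, v 2, v 1, v 3]) v = 0 := by
  obtain ⟨a, b, c, d, rfl⟩ : ∃ a b c d, v = ![a, b, c, d] := ⟨_, _, _, _, vec_fin_four_eta v⟩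
  rw [fact_astar_yt_apply]
  simp only [Matrix.cons_val]
  linear_combination hR.antisymm_left a c b d + hR.antisymm_left a c d b
    - hR.antisymm_left a d b c - hR.antisymm_left a d c b - hR.antisymm_left b c a d
    - hR.antisymm_left b c d a + hR.antisymm_left b d a c + hR.antisymm_left b d c a
end IsAlgCurvatureTensor

variable [AddCommGroup V] [Module ℝ V]

theorem isAlgCurvatureTensor_fact_astar_yt (F : (Fin 4 → V) → ℝ) :
    IsAlgCurvatureTensor (fact (astar yt) F) := by
  refine ⟨fun w x y z => ?_, fun w x y z => ?_, fun w x y z => ?_⟩ <;>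
    simp only [fact_astar_yt_apply, Matrix.cons_val] <;> ring

variable (V) in
def algCurvatureTensors : Submodule ℝ (MultilinearMap ℝ (fun _ : Fin 4 => V) ℝ) where
  carrier := {R | IsAlgCurvatureTensor ⇑R}
  zero_mem' := ⟨fun _ _ _ _ => by simp, fun _ _ _ _ => by simp, fun _ _ _ _ => by simp⟩
  add_mem' {R S} hR hS := by
    refine ⟨fun w x y z => ?_, fun w x y z => ?_, fun w x y z => ?_⟩ <;> simp only [add_apply]
    · linear_combination hR.antisymm w x y z + hS.antisymm w x y z
    · linear_combination hR.pair_symm w x y z + hS.pair_symm w x y z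
    · linear_combination hR.bianchi w x y z + hS.bianchi w x y z
  smul_mem' c R hR := by
    refine ⟨fun w x y z => ?_, fun w x y z => ?_, fun w x y z => ?_⟩ <;>
      simp only [smul_apply, smul_eq_mul]
    · linear_combination c * hR.antisymm w x y z
    · linear_combination c * hR.pair_symm w x y z
    · linear_combination c * hR.bianchi w x y z

end CurvatureTensors

section Slices

variable {V : Type} [AddCommGroup V] [Module ℝ V] {r : ℕ}

def lastSlice (R : MultilinearMap ℝ (fun _ : Fin (r + 1) => V) ℝ) (u : V) :
    MultilinearMap ℝ (fun _ : Fin r => V) ℝ :=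
  (LinearMap.applyₗ u).compMultilinearMap R.curryRight

@[simp]
theorem lastSlice_apply (R : MultilinearMap ℝ (fun _ : Fin (r + 1) => V) ℝ) (u : V)
    (x : Fin r → V) : lastSlice R u x = R (Fin.snoc x u) :=
  rfl

def tensorLinear (U : MultilinearMap ℝ (fun _ : Fin r => V) ℝ) (w : V →ₗ[ℝ] ℝ) :
    MultilinearMap ℝ (fun _ : Fin (r + 1) => V) ℝ :=
  ((LinearMap.toSpanSingleton ℝ (V →ₗ[ℝ] ℝ) w).compMultilinearMap U).uncurryRight

@[simp]
theorem tensorLinear_apply (U : MultilinearMap ℝ (fun _ : Fin r => V) ℝ) (w : V →ₗ[ℝ] ℝ)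
    (v : Fin (r + 1) → V) : tensorLinear U w v = U (Fin.init v) * w (v (Fin.last r)) :=
  rfl

theorem sum_gact_lastSlice_mul_coord {ι : Type*} [Fintype ι] (b : Module.Basis ι ℝ V)
    (e : MonoidAlgebra ℝ (Perm (Fin r))) (R : MultilinearMap ℝ (fun _ : Fin (r + 1) => V) ℝ)
    (x : Fin r → V) (u : V) :
    ∑ j, gact e (lastSlice R (b j)) x * b.coord j u = gact e (lastSlice R u) x := by
  have := LinearMap.congr_fun
    (b.sum_dual_apply_smul_coord (∑ p, e.coeff p • R.curryRight (fun i => x (p i)))) u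
  simpa [gact_apply, fact, mul_comm] using this

end Slices

section Reconstruction

variable {V : Type} [AddCommGroup V] [Module ℝ V]

/-- The coefficient `α(e)` of `R` in `IsAlgCurvatureTensor.gact_lastSlice`. -/
def curvatureWeight (e : MonoidAlgebra ℝ (Perm (Fin 3))) : ℝ :=
  e.coeff 1 - e.coeff (swap 0 1) - e.coeff (finRotate 3) + e.coeff (swap 0 2)

namespace IsAlgCurvatureTensor

variable {R : MultilinearMap ℝ (fun _ : Fin 4 => V) ℝ}

theorem gact_lastSlice (hR : IsAlgCurvatureTensor R) (e : MonoidAlgebra ℝ (Perm (Fin 3)))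
    (a b c d : V) :
    gact e (lastSlice R d) ![a, b, c] = curvatureWeight e * R ![a, b, c, d] +
      (e.coeff (swap 1 2) + e.coeff (finRotate 3) - e.coeff (finRotate 3)⁻¹ - e.coeff (swap 0 2)) *
        R ![a, c, b, d] := by
  simp only [gact_apply_fin_three, lastSlice_apply, Matrix.cons_val, Matrix.Fin.snoc_vecCons,
    Matrix.Fin.snoc_vecEmpty, curvatureWeight]
  have hbcad : R ![b, c, a, d] = R ![a, c, b, d] - R ![a, b, c, d] := by
    linear_combination hR.pair_symm b c a d + hR.bianchi a b c d - hR.antisymm a c b d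
  linear_combination e.coeff (swap 0 1) * hR.antisymm_left a b c d +
    e.coeff (finRotate 3) * hbcad + e.coeff (finRotate 3)⁻¹ * hR.antisymm_left a c b d +
    e.coeff (swap 0 2) * (hR.antisymm_left b c a d - hbcad)

theorem fact_astar_yt_gact_lastSlice (hR : IsAlgCurvatureTensor R)
    (e : MonoidAlgebra ℝ (Perm (Fin 3))) (v : Fin 4 → V) :
    fact (astar yt) (fun v => gact e (lastSlice R (v 3)) ![v 0, v 1, v 2]) v =
      12 * curvatureWeight e * R v := by
  have hself := hR.fact_astar_yt_self v
  have hswap := hR.fact_astar_yt_swap v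
  rw [fact_astar_yt_apply] at hself hswap ⊢
  simp only [Matrix.cons_val, hR.gact_lastSlice] at hself hswap ⊢
  linear_combination curvatureWeight e * hself + (e.coeff (swap 1 2) + e.coeff (finRotate 3) -
    e.coeff (finRotate 3)⁻¹ - e.coeff (swap 0 2)) * hswap

theorem sum_gact_astar_yt_tensorLinear (hR : IsAlgCurvatureTensor R) {ι : Type*} [Fintype ι]
    (b : Module.Basis ι ℝ V) (e : MonoidAlgebra ℝ (Perm (Fin 3))) :
    ∑ j, gact (astar yt) (tensorLinear (gact e (lastSlice R (b j))) (b.coord j)) =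
      (12 * curvatureWeight e) • R := by
  have hsum : ∑ j, ⇑(tensorLinear (gact e (lastSlice R (b j))) (b.coord j)) =
      fun v => gact e (lastSlice R (v 3)) ![v 0, v 1, v 2] := by
    ext v
    simp only [Finset.sum_apply, tensorLinear_apply, init_fin_four]
    exact sum_gact_lastSlice_mul_coord b e R _ _
  ext v
  rw [sum_apply, smul_apply, smul_eq_mul, ← hR.fact_astar_yt_gact_lastSlice e v, ← hsum,
    fact_finset_sum]
  simp only [gact_apply]

end IsAlgCurvatureTensor

end Reconstruction

section Span

variable {V : Type} [AddCommGroup V] [Module ℝ V]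

theorem span_le_algCurvatureTensors (S : Set (MultilinearMap ℝ (fun _ : Fin 4 => V) ℝ))
    (hS : ∀ T ∈ S, ∃ F : (Fin 4 → V) → ℝ, ∀ v, T v = fact (astar yt) F v) :
    Submodule.span ℝ S ≤ algCurvatureTensors V := by
  refine Submodule.span_le.mpr fun T hT => ?_
  obtain ⟨F, hF⟩ := hS T hT
  show IsAlgCurvatureTensor ⇑T
  rw [funext hF]
  exact isAlgCurvatureTensor_fact_astar_yt F

theorem algCurvatureTensors_eq_span [FiniteDimensional ℝ V] (e : MonoidAlgebra ℝ (Perm (Fin 3)))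
    (he : ∀ U : MultilinearMap ℝ (fun _ : Fin 3 => V) ℝ, gact e (gact e U) = gact e U)
    (hw : curvatureWeight e ≠ 0) :
    algCurvatureTensors V = Submodule.span ℝ {T : MultilinearMap ℝ (fun _ : Fin 4 => V) ℝ |
      ∃ (U : MultilinearMap ℝ (fun _ : Fin 3 => V) ℝ) (w : V →ₗ[ℝ] ℝ),
        gact e U = U ∧
        ∀ v : Fin 4 → V,
          T v = fact (astar yt) (fun v' => U ![v' 0, v' 1, v' 2] * w (v' 3)) v} := by
  refine le_antisymm (fun R hR => ?_)
    (span_le_algCurvatureTensors _ fun T ⟨_, _, _, hT⟩ => ⟨_, hT⟩)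
  let b := Module.finBasis ℝ V
  have hrepr : R = (12 * curvatureWeight e)⁻¹ •
      ∑ j, gact (astar yt) (tensorLinear (gact e (lastSlice R (b j))) (b.coord j)) := by
    rw [IsAlgCurvatureTensor.sum_gact_astar_yt_tensorLinear hR,
      inv_smul_smul₀ (mul_ne_zero (by norm_num) hw)]
  rw [hrepr]
  refine Submodule.smul_mem _ _ (Submodule.sum_mem _ fun j _ => Submodule.subset_span ?_)
  refine ⟨gact e (lastSlice R (b j)), b.coord j, he _, fun v => ?_⟩
  rw [gact_apply]
  congr 1
  ext v'
  rw [tensorLinear_apply, init_fin_four]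
  rfl

end Span

section EtaXi

variable {V : Type} [AddCommGroup V] [Module ℝ V]

theorem gact_eta_gact_eta (U : MultilinearMap ℝ (fun _ : Fin 3 => V) ℝ) :
    gact eta (gact eta U) = gact eta U := by
  ext x
  simp only [gact_apply_fin_three, Matrix.cons_val]
  norm_num +decide [eta, MonoidAlgebra.coeff_single, Finsupp.single_apply]
  ring

theorem gact_xi_gact_xi (ν : ℝ) (U : MultilinearMap ℝ (fun _ : Fin 3 => V) ℝ) :
    gact (xi ν) (gact (xi ν) U) = gact (xi ν) U := by
  ext x
  simp only [gact_apply_fin_three, Matrix.cons_val]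
  norm_num +decide [xi, MonoidAlgebra.coeff_single, Finsupp.single_apply]
  ring

theorem curvatureWeight_eta : curvatureWeight eta = 4 / 3 := by
  norm_num +decide [curvatureWeight, eta, MonoidAlgebra.coeff_single, Finsupp.single_apply]

theorem curvatureWeight_xi (ν : ℝ) : curvatureWeight (xi ν) = (2 * ν - 1) / 3 := by
  norm_num +decide [curvatureWeight, xi, MonoidAlgebra.coeff_single, Finsupp.single_apply]
  ring

end EtaXi

/-- For `e = η` or `e = ξ_ν` with `ν ≠ 1/2`, the space `A(V)` of algebraic
curvature tensors equals the linear span of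
`{y_t*(U⊗w) : U trilinear with eU = U, w linear}`. -/
theorem stmt_12 (V : Type) [AddCommGroup V] [Module ℝ V] [FiniteDimensional ℝ V]
    (e : MonoidAlgebra ℝ (Equiv.Perm (Fin 3)))
    (he : e = eta ∨ ∃ ν : ℝ, ν ≠ 1/2 ∧ e = xi ν) :
    {R : MultilinearMap ℝ (fun _ : Fin 4 => V) ℝ |
      (∀ w x y z : V, R ![w, x, y, z] = - R ![w, x, z, y]) ∧
      (∀ w x y z : V, R ![w, x, y, z] = R ![y, z, w, x]) ∧
      (∀ w x y z : V, R ![w, x, y, z] + R ![w, y, z, x] + R ![w, z, x, y] = 0)} =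
    ↑(Submodule.span ℝ {T : MultilinearMap ℝ (fun _ : Fin 4 => V) ℝ |
      ∃ (U : MultilinearMap ℝ (fun _ : Fin 3 => V) ℝ) (w : V →ₗ[ℝ] ℝ),
        gact e U = U ∧
        ∀ v : Fin 4 → V,
          T v = fact (astar yt) (fun v' => U ![v' 0, v' 1, v' 2] * w (v' 3)) v}) := by
  obtain ⟨hidem, hweight⟩ :
      (∀ U : MultilinearMap ℝ (fun _ : Fin 3 => V) ℝ, gact e (gact e U) = gact e U) ∧
        curvatureWeight e ≠ 0 := by
    rcases he with rfl | ⟨ν, hν, rfl⟩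
    · exact ⟨gact_eta_gact_eta, by norm_num [curvatureWeight_eta]⟩
    · refine ⟨gact_xi_gact_xi ν, fun h => hν ?_⟩
      rw [curvatureWeight_xi] at h
      linarith
  rw [← algCurvatureTensors_eq_span e hidem hweight]
  ext R
  exact ⟨fun ⟨h₁, h₂, h₃⟩ => ⟨h₁, h₂, h₃⟩, fun ⟨h₁, h₂, h₃⟩ => ⟨h₁, h₂, h₃⟩⟩
end

section
/- Let V be a real vector space, ν ∈ ℝ with ν ≠ 1 and ν ≠ −1, and U : V^3 → ℝ a trilinear map with ξ_ν·U = U. Then for all x,y,z ∈ V the following four identities hold, where A := (ν²−ν+1)/(ν²−1), A' := (ν²−2ν)/(ν²−1), B := (2ν−1)/(ν²−1): U(z,y,x) = A·U(x,y,z) − B·U(x,z,y); U(z,x,y) = −A'·U(x,y,z) − A·U(x,z,y); U(y,z,x) = −B·U(x,y,z) + A·U(x,z,y); U(y,x,z) = −A·U(x,y,z) − A'·U(x,z,y). -/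
section gact

variable {V : Type} [AddCommGroup V] [Module ℝ V] {r : ℕ}
  (T : MultilinearMap ℝ (fun _ : Fin r => V) ℝ)

theorem gact_add (a b : MonoidAlgebra ℝ (Equiv.Perm (Fin r))) :
    gact (a + b) T = gact a T + gact b T := by
  simp only [gact, MonoidAlgebra.coeff_add, Finsupp.add_apply, add_smul, Finset.sum_add_distrib]

theorem gact_sub (a b : MonoidAlgebra ℝ (Equiv.Perm (Fin r))) :
    gact (a - b) T = gact a T - gact b T := by
  ext v
  simp [gact, sub_mul]

theorem gact_smul (c : ℝ) (a : MonoidAlgebra ℝ (Equiv.Perm (Fin r))) :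
    gact (c • a) T = c • gact a T := by
  simp only [gact, MonoidAlgebra.coeff_smul, Finsupp.smul_apply, smul_eq_mul, mul_smul,
    Finset.smul_sum]

theorem gact_single (p : Equiv.Perm (Fin r)) (c : ℝ) :
    gact (MonoidAlgebra.single p c) T = c • T.domDomCongr p := by
  classical
  simp [gact, MonoidAlgebra.coeff_single, Finsupp.single_apply]

end gact

theorem fin3_comp_perm_eq {α : Type*} (v : Fin 3 → α) (σ : Equiv.Perm (Fin 3)) :
    (fun i => v (σ i)) = ![v (σ 0), v (σ 1), v (σ 2)] := by
  ext i; fin_cases i <;> rfl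

theorem xi_fixed_apply {V : Type} [AddCommGroup V] [Module ℝ V] {ν : ℝ}
    {U : MultilinearMap ℝ (fun _ : Fin 3 => V) ℝ} (hU : gact (xi ν) U = U) (a b c : V) :
    2 * U ![a, b, c] = ν * U ![a, c, b] + (1 - ν) * U ![b, a, c] - ν * U ![b, c, a] +
      (ν - 1) * U ![c, a, b] - U ![c, b, a] := by
  have h := DFunLike.congr_fun hU ![a, b, c]
  simp only [xi, MonoidAlgebra.single_sub, gact_smul, gact_add, gact_sub, gact_single, smul_apply,
    add_apply, sub_apply, MultilinearMap.domDomCongr_apply, fin3_comp_perm_eq] at h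
  simp only [Fin.isValue, Equiv.Perm.coe_one, id_eq, Matrix.cons_val_zero, Matrix.cons_val_one,
    Matrix.cons_val, smul_eq_mul, one_mul, ne_eq, zero_ne_one, not_false_eq_true, Fin.reduceEq,
    Equiv.swap_apply_of_ne_of_ne, Equiv.swap_apply_left, Equiv.swap_apply_right, finRotate_apply,
    zero_add, Fin.reduceAdd, Equiv.Perm.coe_inv, finRotate_symm_apply, zero_sub, sub_self,
    Fin.reduceSub, one_ne_zero] at h
  linear_combination -3 * h

/-- If `ν ≠ 1`, `ν ≠ −1` and `U : V³ → ℝ` is trilinear with `ξ_ν·U = U`,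
then with `A = (ν²−ν+1)/(ν²−1)`, `A' = (ν²−2ν)/(ν²−1)`, `B = (2ν−1)/(ν²−1)`:
`U(z,y,x) = A·U(x,y,z) − B·U(x,z,y)`, `U(z,x,y) = −A'·U(x,y,z) − A·U(x,z,y)`,
`U(y,z,x) = −B·U(x,y,z) + A·U(x,z,y)`, `U(y,x,z) = −A·U(x,y,z) − A'·U(x,z,y)`. -/
theorem stmt_17 (V : Type) [AddCommGroup V] [Module ℝ V]
    (ν : ℝ) (hν1 : ν ≠ 1) (hν2 : ν ≠ -1)
    (U : MultilinearMap ℝ (fun _ : Fin 3 => V) ℝ) (hU : gact (xi ν) U = U) :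
    ∀ x y z : V,
      U ![z, y, x] = ((ν^2 - ν + 1)/(ν^2 - 1)) * U ![x, y, z] -
          ((2*ν - 1)/(ν^2 - 1)) * U ![x, z, y] ∧
      U ![z, x, y] = -((ν^2 - 2*ν)/(ν^2 - 1)) * U ![x, y, z] -
          ((ν^2 - ν + 1)/(ν^2 - 1)) * U ![x, z, y] ∧
      U ![y, z, x] = -((2*ν - 1)/(ν^2 - 1)) * U ![x, y, z] +
          ((ν^2 - ν + 1)/(ν^2 - 1)) * U ![x, z, y] ∧
      U ![y, x, z] = -((ν^2 - ν + 1)/(ν^2 - 1)) * U ![x, y, z] -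
          ((ν^2 - 2*ν)/(ν^2 - 1)) * U ![x, z, y] := by
  intro x y z
  have hyxz := xi_fixed_apply hU y x z
  have hzyx := xi_fixed_apply hU z y x
  have hyzx := xi_fixed_apply hU y z x
  have hzxy := xi_fixed_apply hU z x y
  have hden : ν ^ 2 - 1 ≠ 0 := sub_ne_zero.mpr (sq_ne_one_iff.mpr ⟨hν1, hν2⟩)
  refine ⟨?_, ?_, ?_, ?_⟩ <;> field_simp
  · linear_combination ((ν + ν^2)/3) * hyxz + ((ν - 2)/3) * hzyx + ((2*ν - 1)/3) * hyzx -
      ((ν + ν^2)/3) * hzxy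
  · linear_combination ((1 + ν)/3) * hyxz + ((ν^2 - 2*ν)/3) * hzyx + ((ν^2 - ν + 1)/3) * hyzx +
      ((ν^2 - ν - 2)/3) * hzxy
  · linear_combination (-(ν + ν^2)/3) * hyxz + ((2*ν - 1)/3) * hzyx + ((ν - 2)/3) * hyzx +
      ((ν + ν^2)/3) * hzxy
  · linear_combination ((ν^2 - ν - 2)/3) * hyxz + ((ν^2 - ν + 1)/3) * hzyx +
      ((ν^2 - 2*ν)/3) * hyzx + ((1 + ν)/3) * hzxy
end
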